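/- arXiv:2302.03074 — 2 statements merged into one kernel-verified Lean document; each statement's English description precedes it below -/
import Mathlib

section
/- Let s be a string over Γ ∪ {□} and x a non-blank index of s with x* > 0. Define the truncated predecessor on d(s) by P(i) = i − 1 if i > 0 and P(0) = 0. Then P(x*) = (x−1)^P; that is, the predecessor of x* in d(s) equals z*, where z is the greatest non-blank index of s that is ≤ x − 1. -/
/-- Strings over `Γ ∪ {□}` are lists of `Option Γ`, with `none` as the blank `□`.
`del` deletes all blanks. -/
def del {Γ : Type} (s : List (Option Γ)) : List Γ := s.reduceOption

/-- Index `x` of `s` is non-blank: it is a valid index carrying a non-blank character. -/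
def NonBlank {Γ : Type} (s : List (Option Γ)) (x : ℕ) : Prop :=
  x < s.length ∧ s[x]? ≠ some none

/-- `star s x` = `x` minus the number of blank indices of `s` strictly below `x`
(equivalently, the number of non-blank indices below `x`). -/
def star {Γ : Type} (s : List (Option Γ)) (x : ℕ) : ℕ :=
  ((s.take x).reduceOption).length

/-- `y` is the least non-blank index of `s` that is `≥ x` (so `x^S = star s y`). -/
def LeastNB {Γ : Type} (s : List (Option Γ)) (x y : ℕ) : Prop :=
  NonBlank s y ∧ x ≤ y ∧ ∀ w, x ≤ w → NonBlank s w → y ≤ w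

/-- `z` is the greatest non-blank index of `s` that is `≤ x` (so `x^P = star s z`). -/
def GreatestNB {Γ : Type} (s : List (Option Γ)) (x z : ℕ) : Prop :=
  NonBlank s z ∧ z ≤ x ∧ ∀ w, w ≤ x → NonBlank s w → w ≤ z

lemma star_succ {Γ : Type} (s : List (Option Γ)) (n : ℕ) :
    star s (n+1) = star s n + (s[n]?.getD none).toList.length := by
  unfold _root_.star
  rw [List.take_succ, List.reduceOption_append, List.length_append]
  congr 1
  cases h : s[n]? with
  | none => simp
  | some o => cases o <;> simp

lemma star_succ_blank {Γ : Type} (s : List (Option Γ)) (n : ℕ) (h : s[n]? = some none) :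
    star s (n+1) = star s n := by
  rw [star_succ, h]; simp

lemma star_succ_nb {Γ : Type} (s : List (Option Γ)) (n : ℕ) (h : NonBlank s n) :
    star s (n+1) = star s n + 1 := by
  obtain ⟨h1, h2⟩ := h
  rw [star_succ]
  cases hg : s[n]? with
  | none => exact absurd ((List.getElem?_eq_none_iff).mp hg) (by omega)
  | some o =>
    cases o with
    | none => exact absurd hg h2
    | some a => simp

theorem stmt_11 {Γ : Type} (s : List (Option Γ)) (x : ℕ)
    (hx : NonBlank s x) (hpos : 0 < star s x) :
    ∀ z, GreatestNB s (x - 1) z → star s x - 1 = star s z := by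
  intro z ⟨hznb, hzle, hzmax⟩
  have hx0 : 0 < x := by
    by_contra h
    have : x = 0 := by omega
    subst this
    simp [_root_.star] at hpos
  have hzlt : z < x := by omega
  -- all indices strictly between z and x are blank
  have hblank : ∀ w, z < w → w < x → s[w]? = some none := by
    intro w h1 h2
    have hwlen : w < s.length := lt_of_lt_of_le h2 (le_of_lt hx.1)
    cases hg : s[w]? with
    | none => exact absurd ((List.getElem?_eq_none_iff).mp hg) (by omega)
    | some o =>
      cases o with
      | none => rfl
      | some a =>
        have : w ≤ z := hzmax w (by omega) ⟨hwlen, by rw [hg]; simp⟩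
        omega
  -- star s x = star s (z+1)
  have key : ∀ k, z + 1 + k ≤ x → star s (z + 1 + k) = star s (z + 1) := by
    intro k
    induction k with
    | zero => intro _; rfl
    | succ n ih =>
      intro hle
      have : z + 1 + (n + 1) = (z + 1 + n) + 1 := by omega
      rw [this, star_succ_blank s _ (hblank _ (by omega) (by omega)), ih (by omega)]
  have hx_eq : star s x = star s (z + 1) := by
    have := key (x - (z + 1)) (by omega)
    rwa [show z + 1 + (x - (z + 1)) = x by omega] at this
  rw [hx_eq, star_succ_nb s z hznb]; omega
end

section
/- Suppose u is a string over Γ ∪ {□} and Y is a subset of indices of u such that every index of u outside Y carries □, and there is a string v over Γ ∪ {□} with |v| = |Y| such that the character of u at the k-th smallest element of Y equals the character of v at index k, for all k < |Y|. Then d(u) = d(v). -/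
/-! The sorted list of `Y` is the filter of `[0, |u|)` by membership in `Y`, and `v` is `u` read
along it; deleting blanks from `u` is a `filterMap` over `[0, |u|)`, and the indices dropped by the
filter carry blanks, so dropping them does not change the result. -/

theorem List.map_getD_range {α : Type*} (l : List α) (d : α) :
    (List.range l.length).map (l.getD · d) = l :=
  List.ext_getElem (by simp) fun i _ hi => by simp [List.getElem?_eq_getElem hi]

theorem List.filterMap_filter_of_eq_none {α β : Type*} {p : α → Bool} {f : α → Option β}
    {l : List α} (h : ∀ x ∈ l, p x = false → f x = none) :
    (l.filter p).filterMap f = l.filterMap f := by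
  rw [List.filterMap_filter]
  refine List.filterMap_congr fun x hx => ?_
  cases hpx : p x
  · exact (h x hx hpx).symm
  · rfl

theorem Finset.sort_eq_filter_range {Y : Finset ℕ} {n : ℕ} (hY : ∀ x ∈ Y, x < n) :
    Y.sort (· ≤ ·) = (List.range n).filter (· ∈ Y) :=
  Y.sortedLT_sort.eq_of_mem_iff ((List.pairwise_lt_range).filter _).sortedLT fun x => by
    simpa using fun hx => hY x hx

theorem del_map {α Γ : Type} (l : List α) (f : α → Option Γ) : del (l.map f) = l.filterMap f := by
  simp [del, List.reduceOption, List.filterMap_map]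

theorem del_map_getD_sort {Γ : Type} (u : List (Option Γ)) (Y : Finset ℕ)
    (hY : ∀ x ∈ Y, x < u.length) (hblank : ∀ x, x < u.length → x ∉ Y → u[x]? = some none) :
    del ((Y.sort (· ≤ ·)).map (u.getD · none)) = del u := by
  conv_rhs => rw [← u.map_getD_range none]
  rw [del_map, del_map, Finset.sort_eq_filter_range hY]
  refine List.filterMap_filter_of_eq_none fun x hx hxY => ?_
  have hx := List.mem_range.1 hx
  simp [hblank x hx (by simpa using hxY)]

theorem eq_map_getD_sort {α : Type*} (u v : List α) (d : α) (Y : Finset ℕ)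
    (hY : ∀ x ∈ Y, x < u.length) (hlen : v.length = Y.card)
    (hchar : ∀ k, k < Y.card → u[(Y.sort (· ≤ ·)).getD k 0]? = v[k]?) :
    v = (Y.sort (· ≤ ·)).map (u.getD · d) := by
  refine List.ext_getElem (by simp [hlen]) fun k hkv _ => ?_
  have hkY : k < Y.card := hlen ▸ hkv
  have hkL : k < (Y.sort (· ≤ ·)).length := by simpa using hkY
  have hu : (Y.sort (· ≤ ·))[k] < u.length := hY _ ((Y.mem_sort _).1 (List.getElem_mem hkL))
  have hchark := hchar k hkY
  rw [List.getD_eq_getElem _ _ hkL, List.getElem?_eq_getElem hu,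
    List.getElem?_eq_getElem hkv, Option.some_inj] at hchark
  simp [← hchark, List.getElem?_eq_getElem hu]

theorem stmt_13 {Γ : Type} (u v : List (Option Γ)) (Y : Finset ℕ)
    (hY : ∀ x ∈ Y, x < u.length)
    (hblank : ∀ x, x < u.length → x ∉ Y → u[x]? = some none)
    (hlen : v.length = Y.card)
    (hchar : ∀ k, k < Y.card → u[(Y.sort (· ≤ ·)).getD k 0]? = v[k]?) :
    del u = del v := by
  rw [eq_map_getD_sort u v none Y hY hlen hchar, del_map_getD_sort u Y hY hblank]
end
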